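/- arXiv:1905.04274 — 7 statements merged into one kernel-verified Lean document; each statement's English description precedes it below -/
import Mathlib

section
/- The λ-bracket on B(p) satisfies the conformal Jacobi identity: [L_i λ [L_j μ L_k]] = [[L_i λ L_j]_{λ+μ} L_k] + [L_j μ [L_i λ L_k]] for all i, j, k ∈ ℤ≥0, as an identity of polynomials in λ, μ, ∂ times L_{i+j+k}. -/
/-- **Conformal Jacobi identity for 𝔅(p).**
In `𝔅(p)` with `[L_i λ L_j] = ((i+p)∂ + (i+j+2p)λ) L_{i+j}`, extended by conformal
sesquilinearity, the identity `[L_i λ [L_j μ L_k]] = [[L_i λ L_j]_{λ+μ} L_k] + [L_j μ [L_i λ L_k]]`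
holds. All three terms are polynomial multiples of `L_{i+j+k}`; using sesquilinearity the
coefficient polynomials in λ, μ, ∂ are:
LHS `= ((j+p)(∂+λ) + (j+k+2p)μ)·((i+p)∂ + (i+j+k+2p)λ)`,
first RHS term `= (−(i+p)(λ+μ) + (i+j+2p)λ)·((i+j+p)∂ + (i+j+k+2p)(λ+μ))`,
second RHS term `= ((i+p)(∂+μ) + (i+k+2p)λ)·((j+p)∂ + (i+j+k+2p)μ)`.
The claim is this polynomial identity, stated by evaluating at all complex values. -/
theorem block_lambda_bracket_jacobi (p : ℂ) (hp : p ≠ 0) (i j k : ℕ) (lam mu d : ℂ) :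
    (((j : ℂ) + p) * (d + lam) + ((j : ℂ) + (k : ℂ) + 2 * p) * mu) *
        (((i : ℂ) + p) * d + ((i : ℂ) + (j : ℂ) + (k : ℂ) + 2 * p) * lam) =
      (-(((i : ℂ) + p)) * (lam + mu) + ((i : ℂ) + (j : ℂ) + 2 * p) * lam) *
          (((i : ℂ) + (j : ℂ) + p) * d + ((i : ℂ) + (j : ℂ) + (k : ℂ) + 2 * p) * (lam + mu)) +
        (((i : ℂ) + p) * (d + mu) + ((i : ℂ) + (k : ℂ) + 2 * p) * lam) *
          (((j : ℂ) + p) * d + ((i : ℂ) + (j : ℂ) + (k : ℂ) + 2 * p) * mu) := by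
  ring
end

section
/- Let p be a negative integer. The C-linear map D on B(p) defined by D(L_j) = (j+p) L_{j−p} for all j ∈ ℤ≥0, extended C[∂]-linearly so that D(∂x) = ∂ D(x), is a conformal derivation of B(p): D([L_i μ L_j]) = [(D L_i)_μ L_j] + [L_i μ (D L_j)] for all i, j. -/
/-- Evaluation of a polynomial in the two variables (λ, ∂) at complex values. -/
noncomputable def ev (q : MvPolynomial (Fin 2) ℂ) (lam d : ℂ) : ℂ :=
  MvPolynomial.eval ![lam, d] q

/-- A conformal derivation `D` of `𝔅(p)` is recorded by its matrix
`d j k ∈ ℂ[λ,∂]`, where `D_λ(L_j) = Σ_k d j k (λ,∂) L_k` (a finite sum for each `j`).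
`IsConfDer p d` states the conformal derivation property
`D_λ[L_i μ L_j] = [(D_λ L_i)_{λ+μ} L_j] + [L_i μ (D_λ L_j)]`, read off on the
coefficient of each basis element `L_k` as an identity of polynomials in λ, μ, ∂
(stated by evaluation at all complex points). -/
def IsConfDer (p : ℂ) (d : ℕ → ℕ → MvPolynomial (Fin 2) ℂ) : Prop :=
  (∀ j, {k | d j k ≠ 0}.Finite) ∧
  ∀ (i j k : ℕ) (lam mu dd : ℂ),
    (((i : ℂ) + p) * (dd + lam) + ((i : ℂ) + (j : ℂ) + 2 * p) * mu) * ev (d (i + j) k) lam dd =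
      (if j ≤ k then
        ev (d i (k - j)) lam (-lam - mu) *
          ((((k - j : ℕ) : ℂ) + p) * dd + ((k : ℂ) + 2 * p) * (lam + mu))
      else 0) +
      (if i ≤ k then
        ev (d j (k - i)) lam (dd + mu) *
          (((i : ℂ) + p) * dd + ((k : ℂ) + 2 * p) * mu)
      else 0)

/-- `D` is inner iff there is an element `a = Σ_m a_m(∂) L_m ∈ 𝔅(p)` (finitely many
nonzero `a_m ∈ ℂ[∂]`) with `D_λ(x) = [a λ x]` for all `x`; on basis elements
`[a λ L_j] = Σ_m a_m(−λ)((m+p)∂ + (m+j+2p)λ) L_{m+j}`. -/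
def IsInner (p : ℂ) (d : ℕ → ℕ → MvPolynomial (Fin 2) ℂ) : Prop :=
  ∃ a : ℕ →₀ Polynomial ℂ, ∀ (j k : ℕ) (lam dd : ℂ),
    ev (d j k) lam dd =
      if j ≤ k then
        (a (k - j)).eval (-lam) *
          ((((k - j : ℕ) : ℂ) + p) * dd + ((k : ℂ) + 2 * p) * lam)
      else 0

/-- For a negative integer `p`, the matrix of the map `D^p(L_j) = (j+p) L_{j−p}`
(no λ- nor ∂-dependence); here `j − p = j + (−p)` with `−p ≥ 1`. -/
noncomputable def dP (p : ℤ) : ℕ → ℕ → MvPolynomial (Fin 2) ℂ :=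
  fun j k => if k = j + (-p).toNat then MvPolynomial.C ((j : ℂ) + (p : ℂ)) else 0

/-- **`D^p` is a conformal derivation of `𝔅(p)` for `p` a negative integer.**
The ℂ-linear map `D(L_j) = (j+p) L_{j−p}`, extended with trivial λ-dependence
(`D_λ = D`, `D_λ(∂x) = (∂+λ)D_λ(x)`), satisfies
`D([L_i μ L_j]) = [(D L_i)_μ L_j] + [L_i μ (D L_j)]` for all `i, j`. -/
theorem dP_is_conformal_derivation (p : ℤ) (hp : p < 0) : IsConfDer (p : ℂ) (dP p) := by
  have hq : (((-p).toNat : ℕ) : ℂ) = -(p : ℂ) := by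
    have h1 : ((-p).toNat : ℤ) = -p := Int.toNat_of_nonneg (by omega)
    exact_mod_cast congrArg (Int.cast : ℤ → ℂ) h1
  constructor
  · intro j
    apply Set.Finite.subset (Set.finite_singleton (j + (-p).toNat))
    intro k hk
    simp only [Set.mem_setOf_eq, dP] at hk
    by_contra h
    exact hk (if_neg (by simpa using h))
  · intro i j k lam mu dd
    by_cases hk : k = i + j + (-p).toNat
    · subst hk
      have hjk : j ≤ i + j + (-p).toNat := by omega
      have hik : i ≤ i + j + (-p).toNat := by omega
      rw [if_pos hjk, if_pos hik,
        show i + j + (-p).toNat - j = i + (-p).toNat from by omega,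
        show i + j + (-p).toNat - i = j + (-p).toNat from by omega]
      simp only [dP, if_pos rfl, ev]
      push_cast [hq]
      simp only [map_add, MvPolynomial.eval_C]
      ring
    · rw [show dP p (i + j) k = 0 from if_neg (by omega)]
      simp only [ev, MvPolynomial.eval_zero, mul_zero]
      split_ifs with h1 h2 h3
      · rw [show dP p i (k - j) = 0 from if_neg (by omega),
          show dP p j (k - i) = 0 from if_neg (by omega)]
        simp
      · rw [show dP p i (k - j) = 0 from if_neg (by omega)]
        simp
      · rw [show dP p j (k - i) = 0 from if_neg (by omega)]
        simp
      · simp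
end

section
/- Let p be a negative integer. The conformal derivation D of B(p) given by D(L_j) = (j+p) L_{j−p} is not inner: there is no element a ∈ B(p) such that D_λ(x) = [a λ x] for all x ∈ B(p). -/
/-- **`D^p` is not inner.**
For `p` a negative integer, the conformal derivation of `𝔅(p)` given by
`D(L_j) = (j+p) L_{j−p}` is not inner: there is no `a ∈ 𝔅(p)` with
`D_λ(x) = [a λ x]` for all `x ∈ 𝔅(p)`. -/
theorem dP_not_inner (p : ℤ) (hp : p < 0) : ¬ IsInner (p : ℂ) (dP p) := by
  rintro ⟨a, ha⟩
  have h := ha 0 ((-p).toNat) 0 0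
  have hdp : dP p 0 ((-p).toNat) = MvPolynomial.C ((0 : ℂ) + (p : ℂ)) := by
    simp [dP]
  rw [hdp] at h
  simp [ev] at h
  exact absurd h (by exact_mod_cast hp.ne)
end

section
/- Suppose a(λ,∂) ∈ C[λ,∂] satisfies p(∂+λ+2μ)a(λ,∂) = ((j+p)∂ + (j+2p)(λ+μ))a(λ,−λ−μ) + (p∂ + (j+2p)μ)a(λ,∂+μ) identically in λ, μ, ∂, where p is a nonzero complex number and j ∈ ℤ≥0. Then a has degree at most 1 in ∂, and writing a(λ,∂) = c₀(λ) + c₁(λ)∂, one has (j+p)c₀(λ) = (j+2p)λ c₁(λ). -/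
open Polynomial

/-- **Shape of `D_λ(L_0)`-coefficients (equations (3.1)–(3.2) of the paper).**
Here `a ∈ (ℂ[λ])[∂]` is a polynomial in ∂ with coefficients in ℂ[λ], evaluated via
`a.eval₂ (Polynomial.evalRingHom lam) d` at λ = `lam`, ∂ = `d`. If
`p(∂+λ+2μ)a(λ,∂) = ((j+p)∂ + (j+2p)(λ+μ))a(λ,−λ−μ) + (p∂ + (j+2p)μ)a(λ,∂+μ)`
identically in λ, μ, ∂ (with `p ≠ 0`, `j ∈ ℤ≥0`), then `a` has degree at most 1 in ∂,
and writing `a(λ,∂) = c₀(λ) + c₁(λ)∂` one has `(j+p)c₀(λ) = (j+2p)λ·c₁(λ)`. -/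
theorem degree_le_one_of_derivation_equation (p : ℂ) (hp : p ≠ 0) (j : ℕ)
    (a : Polynomial (Polynomial ℂ))
    (h : ∀ lam mu d : ℂ,
      p * (d + lam + 2 * mu) * (a.eval₂ (Polynomial.evalRingHom lam) d) =
        (((j : ℂ) + p) * d + ((j : ℂ) + 2 * p) * (lam + mu)) *
            (a.eval₂ (Polynomial.evalRingHom lam) (-lam - mu)) +
          (p * d + ((j : ℂ) + 2 * p) * mu) *
            (a.eval₂ (Polynomial.evalRingHom lam) (d + mu))) :
    a.natDegree ≤ 1 ∧
      Polynomial.C ((j : ℂ) + p) * a.coeff 0 =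
        Polynomial.C ((j : ℂ) + 2 * p) * Polynomial.X * a.coeff 1 := by
  -- set μ = 0 in the hypothesis
  have key : ∀ lam d : ℂ,
      p * lam * (a.eval₂ (Polynomial.evalRingHom lam) d) =
        (((j : ℂ) + p) * d + ((j : ℂ) + 2 * p) * lam) *
          (a.eval₂ (Polynomial.evalRingHom lam) (-lam)) := by
    intro lam d
    have h0 := h lam 0 d
    simp only [mul_zero, add_zero, sub_zero] at h0
    linear_combination h0
  -- for each fixed lam, a polynomial identity in ∂ over ℂ
  have hB : ∀ lam : ℂ,
      C (p * lam) * (a.map (Polynomial.evalRingHom lam)) =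
        (C ((j : ℂ) + p) * X + C (((j : ℂ) + 2 * p) * lam)) *
          C ((a.map (Polynomial.evalRingHom lam)).eval (-lam)) := by
    intro lam
    apply Polynomial.funext
    intro d
    simp only [eval_mul, eval_add, eval_C, eval_X]
    have := key lam d
    rw [Polynomial.eval₂_eq_eval_map, Polynomial.eval₂_eq_eval_map] at this
    linear_combination this
  -- coefficient extraction (pointwise in lam)
  have fk : ∀ (k : ℕ) (lam : ℂ), 2 ≤ k →
      p * lam * ((a.coeff k).eval lam) = 0 := by
    intro k lam hk
    have := congrArg (fun q => Polynomial.coeff q k) (hB lam)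
    simp only [Polynomial.coeff_C_mul, Polynomial.coeff_map,
      Polynomial.coe_evalRingHom, Polynomial.coeff_mul_C, Polynomial.coeff_add,
      Polynomial.coeff_X, Polynomial.coeff_C,
      if_neg (show ¬(1 = k) by omega), if_neg (show ¬(k = 0) by omega)] at this
    linear_combination this
  have f1 : ∀ lam : ℂ,
      p * lam * ((a.coeff 1).eval lam) =
        ((j : ℂ) + p) * ((a.map (Polynomial.evalRingHom lam)).eval (-lam)) := by
    intro lam
    have := congrArg (fun q => Polynomial.coeff q 1) (hB lam)
    simp only [Polynomial.coeff_C_mul, Polynomial.coeff_map,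
      Polynomial.coe_evalRingHom, Polynomial.coeff_mul_C, Polynomial.coeff_add,
      Polynomial.coeff_X, Polynomial.coeff_C] at this
    norm_num at this
    linear_combination this
  have f0 : ∀ lam : ℂ,
      p * lam * ((a.coeff 0).eval lam) =
        ((j : ℂ) + 2 * p) * lam *
          ((a.map (Polynomial.evalRingHom lam)).eval (-lam)) := by
    intro lam
    have := congrArg (fun q => Polynomial.coeff q 0) (hB lam)
    simp only [Polynomial.coeff_C_mul, Polynomial.coeff_map,
      Polynomial.coe_evalRingHom, Polynomial.coeff_mul_C, Polynomial.coeff_add,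
      Polynomial.coeff_X, Polynomial.coeff_C] at this
    norm_num at this
    linear_combination this
  have hCX : (C p * X : Polynomial ℂ) ≠ 0 := by
    intro hzero
    have := mul_ne_zero (Polynomial.C_ne_zero.mpr hp) (Polynomial.X_ne_zero (R := ℂ))
    exact this hzero
  constructor
  · rw [Polynomial.natDegree_le_iff_coeff_eq_zero]
    intro k hk
    have hpoly : C p * X * a.coeff k = 0 := by
      apply Polynomial.funext
      intro lam
      simpa [mul_assoc] using fk k lam (by omega)
    rcases mul_eq_zero.mp hpoly with h' | h'
    · exact absurd h' hCX
    · exact h'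
  · have hpoly : C p * X * (C ((j : ℂ) + p) * a.coeff 0) =
        C p * X * (C ((j : ℂ) + 2 * p) * X * a.coeff 1) := by
      apply Polynomial.funext
      intro lam
      simp only [eval_mul, eval_add, eval_C, eval_X]
      linear_combination ((j : ℂ) + p) * f0 lam -
        ((j : ℂ) + 2 * p) * lam * f1 lam
    exact mul_left_cancel₀ hCX hpoly
end

section
/- For any nonzero p ∈ ℂ, if p ∉ ℤ<0 then every conformal derivation of B(p) is inner; if p ∈ ℤ<0 then Der(B(p)) = Inn(B(p)) ⊕ C·D^p, where D^p(L_j) = (j+p)L_{j−p}. -/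

lemma ev_eq_eval (q : MvPolynomial (Fin 2) ℂ) (x : Fin 2 → ℂ) :
    MvPolynomial.eval x q = ev q (x 0) (x 1) := by
  have h : ![x 0, x 1] = x := by funext i; fin_cases i <;> rfl
  rw [ev, h]

lemma mv_cancel {q r : MvPolynomial (Fin 2) ℂ}
    (h : ∀ lam dd : ℂ, lam * ev q lam dd = lam * ev r lam dd) : q = r := by
  have h2 : MvPolynomial.X 0 * q = MvPolynomial.X 0 * r := by
    apply MvPolynomial.funext
    intro x
    simp only [MvPolynomial.eval_mul, MvPolynomial.eval_X, ev_eq_eval]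
    exact h (x 0) (x 1)
  exact mul_left_cancel₀ (MvPolynomial.X_ne_zero 0) h2

lemma eval_polyaeval (q : Polynomial ℂ) (g : MvPolynomial (Fin 2) ℂ) (x : Fin 2 → ℂ) :
    MvPolynomial.eval x (Polynomial.aeval g q) = q.eval (MvPolynomial.eval x g) := by
  induction q using Polynomial.induction_on with
  | C a => simp
  | add u v hu hv => simp [hu, hv]
  | monomial n a ih => simp [Polynomial.aeval_def, Polynomial.eval₂_eq_eval_map]

noncomputable def phi (d : ℕ → ℕ → MvPolynomial (Fin 2) ℂ) (m : ℕ) : Polynomial ℂ :=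
  MvPolynomial.aeval ![Polynomial.X, -Polynomial.X] (d 0 m)

lemma phi_eval (d : ℕ → ℕ → MvPolynomial (Fin 2) ℂ) (m : ℕ) (lam : ℂ) :
    (phi d m).eval lam = ev (d 0 m) lam (-lam) := by
  rw [phi, ev]
  induction (d 0 m) using MvPolynomial.induction_on with
  | C a => simp
  | add q r hq hr => simp [hq, hr]
  | mul_X q i hq => fin_cases i <;> simp [hq]

lemma key_identity {p : ℂ} {d : ℕ → ℕ → MvPolynomial (Fin 2) ℂ} (hd : IsConfDer p d)
    (j k : ℕ) (lam dd : ℂ) :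
    p * lam * ev (d j k) lam dd =
      if j ≤ k then ev (d 0 (k - j)) lam (-lam) *
        ((((k - j : ℕ) : ℂ) + p) * dd + ((k : ℂ) + 2 * p) * lam) else 0 := by
  have H := hd.2 0 j k lam 0 dd
  simp only [Nat.zero_add, Nat.cast_zero, zero_add, mul_zero, add_zero, Nat.sub_zero,
    Nat.zero_le, if_true, sub_zero] at H
  by_cases hjk : j ≤ k
  · rw [if_pos hjk] at H ⊢; linear_combination H
  · rw [if_neg hjk] at H ⊢; linear_combination H

lemma ev_zero (lam dd : ℂ) : ev (0 : MvPolynomial (Fin 2) ℂ) lam dd = 0 := by simp [ev]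

lemma phi_eval' {d : ℕ → ℕ → MvPolynomial (Fin 2) ℂ} (m : ℕ) (lam : ℂ) :
    ev (d 0 m) lam (-lam) = (phi d m).eval lam := (phi_eval d m lam).symm

lemma phi_divX {p : ℂ} {d : ℕ → ℕ → MvPolynomial (Fin 2) ℂ} (hd : IsConfDer p d)
    (m : ℕ) (hmp : (m : ℂ) + p ≠ 0) (lam : ℂ) :
    (phi d m).eval lam = lam * ((phi d m).divX.eval lam) := by
  have K := key_identity hd 0 m 0 1
  rw [if_pos (Nat.zero_le m), Nat.sub_zero] at K
  simp only [mul_zero, zero_mul, mul_one, add_zero, neg_zero] at K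
  have h0 : (phi d m).eval 0 = 0 := by
    rw [phi_eval]
    have h1 : ev (d 0 m) 0 (-0) * ((m : ℂ) + p) = 0 := by
      rw [neg_zero]; linear_combination -K
    rw [neg_zero] at h1 ⊢
    exact (mul_eq_zero.mp h1).resolve_right hmp
  have hX : Polynomial.X * (phi d m).divX = phi d m := by
    have := Polynomial.X_mul_divX_add (phi d m)
    rwa [Polynomial.coeff_zero_eq_eval_zero, h0, map_zero, add_zero] at this
  conv_lhs => rw [← hX]
  simp [mul_comm]

lemma entry_zero {p : ℂ} (hp : p ≠ 0) {d : ℕ → ℕ → MvPolynomial (Fin 2) ℂ}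
    (hd : IsConfDer p d) {j k : ℕ} (hjk : ¬ j ≤ k) : d j k = 0 := by
  apply mv_cancel
  intro lam dd
  have K := key_identity hd j k lam dd
  rw [if_neg hjk] at K
  have h2 : p * (lam * ev (d j k) lam dd) = p * (lam * ev 0 lam dd) := by
    rw [ev_zero]; linear_combination K
  exact mul_left_cancel₀ hp h2

lemma entry_formula {p : ℂ} (hp : p ≠ 0) {d : ℕ → ℕ → MvPolynomial (Fin 2) ℂ}
    (hd : IsConfDer p d) {j k : ℕ} (hjk : j ≤ k) (hmp : ((k - j : ℕ) : ℂ) + p ≠ 0) :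
    d j k = Polynomial.aeval (-(MvPolynomial.X 0))
        (p⁻¹ • ((phi d (k - j)).divX.comp (-Polynomial.X))) *
      (MvPolynomial.C (((k - j : ℕ) : ℂ) + p) * MvPolynomial.X 1 +
        MvPolynomial.C ((k : ℂ) + 2 * p) * MvPolynomial.X 0) := by
  apply mv_cancel
  intro lam dd
  have K := key_identity hd j k lam dd
  rw [if_pos hjk] at K
  rw [phi_eval', phi_divX hd _ hmp] at K
  have hev : ev (Polynomial.aeval (-(MvPolynomial.X 0))
        (p⁻¹ • ((phi d (k - j)).divX.comp (-Polynomial.X))) *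
      (MvPolynomial.C (((k - j : ℕ) : ℂ) + p) * MvPolynomial.X 1 +
        MvPolynomial.C ((k : ℂ) + 2 * p) * MvPolynomial.X 0)) lam dd =
      (p⁻¹ * ((phi d (k - j)).divX.eval lam)) *
        ((((k - j : ℕ) : ℂ) + p) * dd + ((k : ℂ) + 2 * p) * lam) := by
    simp [ev, eval_polyaeval, Polynomial.eval_comp, smul_eq_mul]
    ring
  rw [hev]
  apply mul_left_cancel₀ hp
  have hpp : p * p⁻¹ = 1 := mul_inv_cancel₀ hp
  linear_combination K - lam * ((phi d (k - j)).divX.eval lam) *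
    ((((k - j : ℕ) : ℂ) + p) * dd + ((k : ℂ) + 2 * p) * lam) * hpp

lemma entry_formula_m0 {p : ℂ} (hp : p ≠ 0) {d : ℕ → ℕ → MvPolynomial (Fin 2) ℂ}
    (hd : IsConfDer p d) {j k : ℕ} (hjk : j ≤ k) (hmp : ((k - j : ℕ) : ℂ) + p = 0) :
    d j k = Polynomial.aeval (MvPolynomial.X 0) (p⁻¹ • phi d (k - j)) *
      MvPolynomial.C ((k : ℂ) + 2 * p) := by
  apply mv_cancel
  intro lam dd
  have K := key_identity hd j k lam dd
  rw [if_pos hjk, phi_eval', hmp, zero_mul, zero_add] at K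
  have hev : ev (Polynomial.aeval (MvPolynomial.X 0) (p⁻¹ • phi d (k - j)) *
      MvPolynomial.C ((k : ℂ) + 2 * p)) lam dd =
      p⁻¹ * ((phi d (k - j)).eval lam) * ((k : ℂ) + 2 * p) := by
    simp [ev, eval_polyaeval, smul_eq_mul]
    ring
  rw [hev]
  apply mul_left_cancel₀ hp
  have hpp : p * p⁻¹ = 1 := mul_inv_cancel₀ hp
  linear_combination K - lam * ((phi d (k - j)).eval lam) * ((k : ℂ) + 2 * p) * hpp

lemma phi_zero_of_dzero {d : ℕ → ℕ → MvPolynomial (Fin 2) ℂ} {m : ℕ}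
    (h : d 0 m = 0) : phi d m = 0 := by rw [phi, h, map_zero]

lemma part1 (p : ℂ) (hp : p ≠ 0) (hni : ∀ n : ℤ, n < 0 → (n : ℂ) ≠ p)
    (d : ℕ → ℕ → MvPolynomial (Fin 2) ℂ) (hd : IsConfDer p d) :
    ∃ a : ℕ →₀ Polynomial ℂ, ∀ (j k : ℕ) (lam dd : ℂ),
      ev (d j k) lam dd =
        if j ≤ k then
          (a (k - j)).eval (-lam) *
            ((((k - j : ℕ) : ℂ) + p) * dd + ((k : ℂ) + 2 * p) * lam)
        else 0 := by
  classical
  have hm : ∀ m : ℕ, ((m : ℂ) + p) ≠ 0 := by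
    intro m h
    rcases Nat.eq_zero_or_pos m with h0 | h0
    · subst h0; simp at h; exact hp h
    · refine hni (-(m : ℤ)) (by omega) ?_
      push_cast
      linear_combination -h
  set a0 : ℕ → Polynomial ℂ :=
    fun m => p⁻¹ • ((phi d m).divX.comp (-Polynomial.X)) with ha0
  have hsupp : ∀ m : ℕ, a0 m ≠ 0 → m ∈ (hd.1 0).toFinset := by
    intro m hm0
    rw [Set.Finite.mem_toFinset]
    intro h0
    exact hm0 (by rw [ha0]; simp [phi_zero_of_dzero h0])
  refine ⟨Finsupp.onFinset (hd.1 0).toFinset a0 hsupp, ?_⟩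
  intro j k lam dd
  by_cases hjk : j ≤ k
  · rw [if_pos hjk, Finsupp.onFinset_apply, ha0]
    rw [entry_formula hp hd hjk (hm (k - j))]
    simp [ev, eval_polyaeval, Polynomial.eval_comp, smul_eq_mul]
    ring
  · rw [if_neg hjk, entry_zero hp hd hjk, ev_zero]

lemma ev_dP (n : ℤ) (j k : ℕ) (lam dd : ℂ) :
    ev (dP n j k) lam dd = if k = j + (-n).toNat then (j : ℂ) + (n : ℂ) else 0 := by
  rw [dP]; split <;> simp [ev]

lemma ev_sub_smul (q r : MvPolynomial (Fin 2) ℂ) (c lam dd : ℂ) :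
    ev (q - c • r) lam dd = ev q lam dd - c * ev r lam dd := by
  simp [ev, MvPolynomial.smul_eq_C_mul]

lemma part2 (p : ℂ) (hp : p ≠ 0) (n : ℤ) (hn : n < 0) (hnp : (n : ℂ) = p)
    (d : ℕ → ℕ → MvPolynomial (Fin 2) ℂ) (hd : IsConfDer p d) :
    ∃! c : ℂ, IsInner p (fun j k => d j k - c • dP n j k) := by
  classical
  set m0 : ℕ := (-n).toNat with hm0
  have hm0z : (m0 : ℤ) = -n := Int.toNat_of_nonneg (by omega)
  have hm0c : ((m0 : ℕ) : ℂ) = -p := by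
    rw [← hnp]
    exact_mod_cast congrArg (fun z : ℤ => (z : ℂ)) hm0z
  have hm' : ∀ m : ℕ, m ≠ m0 → ((m : ℂ) + p) ≠ 0 := by
    intro m hne h
    apply hne
    have : (m : ℂ) = (m0 : ℂ) := by rw [hm0c]; linear_combination h
    exact_mod_cast this
  set q' : Polynomial ℂ := p⁻¹ • phi d m0 with hq'
  set c : ℂ := q'.eval 0 with hc
  set r' : Polynomial ℂ := (q' - Polynomial.C c).divX with hr'def
  have hr' : ∀ lam : ℂ, q'.eval lam - c = lam * r'.eval lam := by
    intro lam
    have h0 : (q' - Polynomial.C c).eval 0 = 0 := by simp [hc]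
    have hX : Polynomial.X * r' = q' - Polynomial.C c := by
      have := Polynomial.X_mul_divX_add (q' - Polynomial.C c)
      rwa [Polynomial.coeff_zero_eq_eval_zero, h0, map_zero, add_zero] at this
    calc q'.eval lam - c = (q' - Polynomial.C c).eval lam := by simp
      _ = (Polynomial.X * r').eval lam := by rw [hX]
      _ = lam * r'.eval lam := by simp
  set a0 : ℕ → Polynomial ℂ :=
    fun m => p⁻¹ • ((phi d m).divX.comp (-Polynomial.X)) with ha0
  set a0' : ℕ → Polynomial ℂ :=
    fun m => if m = m0 then r'.comp (-Polynomial.X) else a0 m with ha0'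
  have hsupp : ∀ m : ℕ, a0' m ≠ 0 → m ∈ insert m0 (hd.1 0).toFinset := by
    intro m hne
    by_cases hmm : m = m0
    · exact Finset.mem_insert.mpr (Or.inl hmm)
    · refine Finset.mem_insert.mpr (Or.inr ?_)
      rw [Set.Finite.mem_toFinset]
      intro h0
      exact hne (by rw [ha0']; simp [hmm, ha0, phi_zero_of_dzero h0])
  refine ⟨c, ⟨Finsupp.onFinset (insert m0 (hd.1 0).toFinset) a0' hsupp, ?_⟩, ?_⟩
  · intro j k lam dd
    simp only [Finsupp.onFinset_apply]
    by_cases hjk : j ≤ k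
    · rw [if_pos hjk]
      by_cases hmm : k - j = m0
      · have hk : k = j + m0 := by omega
        have hkc : (k : ℂ) = (j : ℂ) + (m0 : ℂ) := by exact_mod_cast congrArg Nat.cast hk
        rw [ev_sub_smul, ev_dP, if_pos hk]
        rw [entry_formula_m0 hp hd hjk (by rw [hmm, hm0c]; ring)]
        have hevd : ev (Polynomial.aeval (MvPolynomial.X 0) (p⁻¹ • phi d (k - j)) *
            MvPolynomial.C ((k : ℂ) + 2 * p)) lam dd =
            q'.eval lam * ((k : ℂ) + 2 * p) := by
          rw [hmm]
          simp [ev, eval_polyaeval, hq', smul_eq_mul]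
          ring
        rw [hevd]
        simp only [ha0', hmm, eq_self_iff_true, if_true]
        rw [Polynomial.eval_comp]
        simp only [Polynomial.eval_neg, Polynomial.eval_X, neg_neg]
        rw [hkc, hnp, hm0c]
        linear_combination ((j : ℂ) + p) * hr' lam
      · have hk : k ≠ j + m0 := by omega
        rw [ev_sub_smul, ev_dP, if_neg hk, mul_zero, sub_zero]
        rw [entry_formula hp hd hjk (hm' _ hmm)]
        simp only [ha0']
        rw [if_neg hmm]
        simp only [ha0]
        simp [ev, eval_polyaeval, Polynomial.eval_comp, smul_eq_mul]
        ring
    · rw [if_neg hjk]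
      have hk : k ≠ j + m0 := by omega
      rw [ev_sub_smul, ev_dP, if_neg hk, mul_zero, sub_zero, entry_zero hp hd hjk, ev_zero]
  · intro c' hc'
    obtain ⟨a', ha'⟩ := hc'
    have H := ha' 0 m0 0 0
    rw [if_pos (Nat.zero_le m0)] at H
    rw [ev_sub_smul, ev_dP, if_pos (by omega : m0 = 0 + m0)] at H
    rw [entry_formula_m0 hp hd (Nat.zero_le m0) (by simp [hm0c])] at H
    have hevd : ev (Polynomial.aeval (MvPolynomial.X 0) (p⁻¹ • phi d (m0 - 0)) *
        MvPolynomial.C ((m0 : ℂ) + 2 * p)) 0 0 = c * ((m0 : ℂ) + 2 * p) := by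
      simp only [Nat.sub_zero]
      simp [ev, eval_polyaeval, hq', hc, smul_eq_mul]
      ring
    rw [hevd] at H
    simp only [Nat.cast_zero, zero_add, mul_zero, add_zero, zero_mul, mul_zero] at H
    rw [hm0c, hnp] at H
    -- H : c * (-p + 2*p) - c' * p = (a' m0).eval (-0) * 0  (approx)
    have : (c - c') * p = 0 := by linear_combination H
    rcases mul_eq_zero.mp this with h | h
    · exact (sub_eq_zero.mp h).symm
    · exact absurd h hp

/-- **Classification of conformal derivations of `𝔅(p)` (Theorem 3.1).**
If `p ∉ ℤ<0` then every conformal derivation of `𝔅(p)` is inner, i.e.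
`Der(𝔅(p)) = Inn(𝔅(p))`. If `p ∈ ℤ<0` then
`Der(𝔅(p)) = Inn(𝔅(p)) ⊕ ℂ·D^p` with `D^p(L_j) = (j+p)L_{j−p}`: every conformal
derivation `d` decomposes as an inner derivation plus `c·D^p` for a *unique* `c ∈ ℂ`
(uniqueness expressing directness of the sum). -/
theorem conformal_derivations_of_block (p : ℂ) (hp : p ≠ 0) :
    ((∀ n : ℤ, n < 0 → (n : ℂ) ≠ p) →
      ∀ d : ℕ → ℕ → MvPolynomial (Fin 2) ℂ, IsConfDer p d → IsInner p d) ∧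
    (∀ n : ℤ, n < 0 → (n : ℂ) = p →
      ∀ d : ℕ → ℕ → MvPolynomial (Fin 2) ℂ, IsConfDer p d →
        ∃! c : ℂ, IsInner p (fun j k => d j k - c • dP n j k)) := by
  constructor
  · intro hni d hd
    exact part1 p hp hni d hd
  · intro n hn hnp d hd
    exact part2 p hp n hn hnp d hd
end

section
/- Let p be a nonzero complex number with 2p ∈ ℤ<0. The 2-λ-bracket β on B(p) with trivial coefficients defined by {L_i λ L_j}_β = δ_{i+j,−2p}(j+p) is a 2-cocycle: {L_i λ [L_j μ L_k]}_β − {L_j μ [L_i λ L_k]}_β + {L_k (−λ−μ) [L_i λ L_j]}_β = 0 for all i, j, k ∈ ℤ≥0, and it is skew-symmetric. -/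
/-- **The 2-λ-bracket `β` is a skew-symmetric 2-cocycle when `2p ∈ ℤ<0` (formula (5.13)).**
With trivial coefficients, `{L_i λ L_j}_β = δ_{i+j,−2p}(j+p)` satisfies the cocycle
condition, which on basis elements reads
`((j+p)λ+(j+k+2p)μ){L_i λ L_{j+k}}_β − ((i+p)μ+(i+k+2p)λ){L_j μ L_{i+k}}_β
  = ((j+p)λ−(i+p)μ){L_{i+j} (λ+μ) L_k}_β`, and `β` is skew-symmetric. -/
theorem beta_is_two_cocycle (p : ℂ) (hp : p ≠ 0)
    (h2p : ∃ n : ℤ, n < 0 ∧ (n : ℂ) = 2 * p) :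
    (∀ (i j k : ℕ) (lam mu : ℂ),
      (((j : ℂ) + p) * lam + ((j : ℂ) + (k : ℂ) + 2 * p) * mu) *
          (if ((i : ℂ) + ((j : ℂ) + (k : ℂ)) = -(2 * p)) then (j : ℂ) + (k : ℂ) + p else 0) -
        (((i : ℂ) + p) * mu + ((i : ℂ) + (k : ℂ) + 2 * p) * lam) *
          (if ((j : ℂ) + ((i : ℂ) + (k : ℂ)) = -(2 * p)) then (i : ℂ) + (k : ℂ) + p else 0) =
        (((j : ℂ) + p) * lam - ((i : ℂ) + p) * mu) *
          (if (((i : ℂ) + (j : ℂ)) + (k : ℂ) = -(2 * p)) then (k : ℂ) + p else 0)) ∧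
    (∀ i j : ℕ,
      (if ((i : ℂ) + (j : ℂ) = -(2 * p)) then (j : ℂ) + p else 0) =
        -(if ((j : ℂ) + (i : ℂ) = -(2 * p)) then (i : ℂ) + p else 0)) := by
  constructor
  · intro i j k lam mu
    by_cases h : (i : ℂ) + (j : ℂ) + (k : ℂ) = -(2 * p)
    · rw [if_pos (by linear_combination h), if_pos (by linear_combination h), if_pos h]
      have hk : (k : ℂ) = -(2 * p) - (i : ℂ) - (j : ℂ) := by linear_combination h
      rw [hk]; ring
    · rw [if_neg (fun hc => h (by linear_combination hc)),
          if_neg (fun hc => h (by linear_combination hc)), if_neg h]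
      ring
  · intro i j
    by_cases h : (i : ℂ) + (j : ℂ) = -(2 * p)
    · rw [if_pos h, if_pos (by linear_combination h)]
      linear_combination h
    · rw [if_neg h, if_neg (fun hc => h (by linear_combination hc))]
      ring
end

section
/- Let g(λ) ∈ C[λ] satisfy (pλ+(k+2p)μ)g(λ) − (pμ+(k+2p)λ)g(μ) = p(λ−μ)g(λ+μ) identically in λ, μ, where p ∈ ℂ is nonzero and k ∈ ℤ≥0. Then g(λ) = g₀δ_{k,−2p} + g₁λ + g₂δ_{k,−p}λ² + g₃δ_{k,0}λ³ for some constants g₀, g₁, g₂, g₃ ∈ ℂ; in particular deg g ≤ 3, and if k ∉ {0, −p, −2p} then g is linear with zero constant term. -/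
/-!
Write `g = ∑ aₙ λⁿ` and `q = k + 2p`. Putting `μ = 0` gives `q a₀ = 0`. For fixed `λ` the
equation is a polynomial identity in `μ` whose right side is `p (λ - μ) g(λ + μ)`, and the
coefficients of `μ` and `μ²` there express `g'` and `g''/2` through `g`. Comparing coefficients
of powers of `λ` then gives `(q - (n - 1) p) aₙ = 0` for `n ≥ 2` and `p n (n - 3) aₙ / 2 = 0`
for `n ≥ 3`. So `aₙ = 0` for `n ≥ 4`, while `a₀`, `a₂`, `a₃` can only be nonzero when
`k = -2p`, `k = -p`, `k = 0` respectively.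
-/

open Polynomial

theorem Polynomial.eq_cubic_of_natDegree_le_three {R : Type*} [Semiring R] {g : R[X]}
    (h : g.natDegree ≤ 3) :
    g = C (g.coeff 0) + C (g.coeff 1) * X + C (g.coeff 2) * X ^ 2 + C (g.coeff 3) * X ^ 3 := by
  conv_lhs => rw [g.as_sum_range_C_mul_X_pow' (by omega : g.natDegree < 4)]
  simp [Finset.sum_range_succ]

theorem ite_eq_self_of_sub_mul_eq_zero {R : Type*} [Ring R] [NoZeroDivisors R] {a b x : R}
    [Decidable (a = b)] (h : (a - b) * x = 0) :
    (if a = b then x else 0) = x := by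
  split_ifs with hab
  · rfl
  · exact ((mul_eq_zero.mp h).resolve_left (sub_ne_zero.mpr hab)).symm

section

variable {R : Type*} [CommRing R]

/-- The equation of `shape_of_g` with `q` in place of `k + 2p`. -/
def SatisfiesCocycleEq (p q : R) (g : R[X]) : Prop :=
  ∀ lam mu : R, (p * lam + q * mu) * g.eval lam - (p * mu + q * lam) * g.eval mu =
    p * (lam - mu) * g.eval (lam + mu)

namespace SatisfiesCocycleEq

variable {p q : R} {g : R[X]}

theorem mul_coeff_zero (hg : SatisfiesCocycleEq p q g) : q * g.coeff 0 = 0 := by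
  have h := hg 1 0
  rw [coeff_zero_eq_eval_zero]
  simp only [mul_one, mul_zero, add_zero, zero_add, sub_zero] at h
  linear_combination -h

theorem eq_taylor [IsDomain R] [Infinite R] (hg : SatisfiesCocycleEq p q g) (lam : R) :
    C (p * lam * g.eval lam) + C (q * g.eval lam) * X - (C p * X + C (q * lam)) * g =
      C p * (C lam - X) * taylor lam g := by
  refine Polynomial.funext fun mu => ?_
  simp only [eval_add, eval_sub, eval_mul, eval_C, eval_X, taylor_eval]
  rw [add_comm mu lam]
  linear_combination hg lam mu

/-- The coefficient of `μ ^ (j + 1)` in `eq_taylor`. -/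
theorem eval_hasseDeriv_succ [IsDomain R] [Infinite R] (hg : SatisfiesCocycleEq p q g) (j : ℕ)
    (lam : R) :
    (if j = 0 then q else 0) * g.eval lam - p * g.coeff j - q * lam * g.coeff (j + 1) =
      p * (lam * (hasseDeriv (j + 1) g).eval lam - (hasseDeriv j g).eval lam) := by
  have h := congrArg (coeff · (j + 1)) (hg.eq_taylor lam)
  simp only [coeff_sub, coeff_add, coeff_C_mul_X] at h
  simp only [coeff_C_succ, add_mul, coeff_add, mul_assoc, coeff_C_mul, coeff_X_mul, sub_mul,
    coeff_sub, taylor_coeff, Nat.add_eq_right] at h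
  split_ifs at h ⊢ <;> linear_combination h

theorem hasseDeriv_succ_eq [IsDomain R] [Infinite R] (hg : SatisfiesCocycleEq p q g) (j : ℕ) :
    C (if j = 0 then q else 0) * g - C (p * g.coeff j) - C (q * g.coeff (j + 1)) * X =
      C p * (X * hasseDeriv (j + 1) g - hasseDeriv j g) := by
  refine Polynomial.funext fun lam => ?_
  simp only [eval_sub, eval_mul, eval_C, eval_X]
  linear_combination hg.eval_hasseDeriv_succ j lam

/-- The coefficient of `λ ^ (n + 2) μ ^ (j + 1)` in the equation. -/
theorem coeff_add_two_eq [IsDomain R] [Infinite R] (hg : SatisfiesCocycleEq p q g) (j n : ℕ) :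
    (if j = 0 then q else 0) * g.coeff (n + 2) =
      p * (((n + j + 2).choose (j + 1) : R) - (n + j + 2).choose j) * g.coeff (n + j + 2) := by
  have h := congrArg (coeff · (n + 2)) (hg.hasseDeriv_succ_eq j)
  simp only [coeff_sub, coeff_C_mul, coeff_C_succ, coeff_X_mul, hasseDeriv_coeff,
    coeff_X_of_ne_one (by omega : n + 2 ≠ 1)] at h
  rw [show n + 1 + (j + 1) = n + j + 2 by ring, show n + 2 + j = n + j + 2 by ring] at h
  linear_combination h

theorem sub_mul_coeff_two [IsDomain R] [Infinite R] (hg : SatisfiesCocycleEq p q g) :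
    (q - p) * g.coeff 2 = 0 := by
  have h := hg.coeff_add_two_eq 0 0
  simp only [↓reduceIte, Nat.reduceAdd, Nat.choose_one_right, Nat.choose_zero_right,
    Nat.cast_one, Nat.cast_ofNat] at h
  linear_combination h

theorem sub_two_mul_coeff_three [IsDomain R] [Infinite R] (hg : SatisfiesCocycleEq p q g) :
    (q - 2 * p) * g.coeff 3 = 0 := by
  have h := hg.coeff_add_two_eq 0 1
  simp only [↓reduceIte, Nat.reduceAdd, Nat.choose_one_right, Nat.choose_zero_right,
    Nat.cast_one, Nat.cast_ofNat] at h
  linear_combination h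

theorem coeff_add_four [IsDomain R] [CharZero R] (hg : SatisfiesCocycleEq p q g) (hp : p ≠ 0)
    (n : ℕ) : g.coeff (n + 4) = 0 := by
  have hlt : n + 4 < (n + 4).choose 2 := by
    simp only [Nat.choose_succ_succ', Nat.choose_zero_right, Nat.choose_one_right]
    omega
  have h := hg.coeff_add_two_eq 1 (n + 1)
  rw [show n + 1 + 1 + 2 = n + 4 by ring, Nat.choose_one_right, if_neg one_ne_zero, zero_mul,
    eq_comm] at h
  exact (mul_eq_zero.mp h).resolve_left
    (mul_ne_zero hp (sub_ne_zero.mpr (Nat.cast_injective.ne hlt.ne')))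

theorem natDegree_le_three [IsDomain R] [CharZero R] (hg : SatisfiesCocycleEq p q g)
    (hp : p ≠ 0) : g.natDegree ≤ 3 := by
  refine natDegree_le_iff_coeff_eq_zero.mpr fun m hm => ?_
  obtain ⟨n, rfl⟩ := Nat.exists_eq_add_of_le' (Nat.succ_le_of_lt hm)
  exact hg.coeff_add_four hp n

end SatisfiesCocycleEq

end

/-- **Shape of `{L_0 λ L_k}_c` for a 2-cocycle with trivial coefficients (formula (5.12)).**
If `g ∈ ℂ[λ]` satisfies `(pλ+(k+2p)μ)g(λ) − (pμ+(k+2p)λ)g(μ) = p(λ−μ)g(λ+μ)` identically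
(`p ≠ 0`, `k ∈ ℤ≥0`), then `g(λ) = g₀δ_{k,−2p} + g₁λ + g₂δ_{k,−p}λ² + g₃δ_{k,0}λ³`
for some constants `g₀,…,g₃`; in particular `deg g ≤ 3`, and if `k ∉ {0, −p, −2p}` then
`g` is linear with zero constant term. -/
theorem shape_of_g (p : ℂ) (hp : p ≠ 0) (k : ℕ) (g : Polynomial ℂ)
    (h : ∀ lam mu : ℂ,
      (p * lam + ((k : ℂ) + 2 * p) * mu) * g.eval lam -
          (p * mu + ((k : ℂ) + 2 * p) * lam) * g.eval mu =
        p * (lam - mu) * g.eval (lam + mu)) :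
    (∃ g0 g1 g2 g3 : ℂ,
      g = C (if (k : ℂ) = -(2 * p) then g0 else 0) + C g1 * X +
          C (if (k : ℂ) = -p then g2 else 0) * X ^ 2 +
          C (if (k : ℂ) = 0 then g3 else 0) * X ^ 3) ∧
    g.natDegree ≤ 3 ∧
    ((k : ℂ) ≠ 0 → (k : ℂ) ≠ -p → (k : ℂ) ≠ -(2 * p) → ∃ g1 : ℂ, g = C g1 * X) := by
  have hg : SatisfiesCocycleEq p ((k : ℂ) + 2 * p) g := h
  have h0 : ((k : ℂ) - -(2 * p)) * g.coeff 0 = 0 := by linear_combination hg.mul_coeff_zero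
  have h2 : ((k : ℂ) - -p) * g.coeff 2 = 0 := by linear_combination hg.sub_mul_coeff_two
  have h3 : ((k : ℂ) - 0) * g.coeff 3 = 0 := by linear_combination hg.sub_two_mul_coeff_three
  have hdeg := hg.natDegree_le_three hp
  have hcubic := eq_cubic_of_natDegree_le_three hdeg
  refine ⟨⟨g.coeff 0, g.coeff 1, g.coeff 2, g.coeff 3, ?_⟩, hdeg,
    fun hk0 hk1 hk2 => ⟨g.coeff 1, ?_⟩⟩
  · rwa [ite_eq_self_of_sub_mul_eq_zero h0, ite_eq_self_of_sub_mul_eq_zero h2,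
      ite_eq_self_of_sub_mul_eq_zero h3]
  · rw [hcubic, (mul_eq_zero.mp h0).resolve_left (sub_ne_zero.mpr hk2),
      (mul_eq_zero.mp h2).resolve_left (sub_ne_zero.mpr hk1),
      (mul_eq_zero.mp h3).resolve_left (sub_ne_zero.mpr hk0)]
    simp
end
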